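/- arXiv:1701.02152 — 3 statements merged into one kernel-verified Lean document; each statement's English description precedes it below -/
import Mathlib

section
/- Let p : E ⥤ B be a Grothendieck opfibration, C a cocomplete category, and F : E ⥤ C a functor. Then for every object b of B, the pointwise left Kan extension of F along p evaluated at b is naturally isomorphic to the colimit of the restriction of F to the fiber E_b. -/
open CategoryTheory CategoryTheory.Functor CategoryTheory.Limits

universe v₂ u u₂

/-- A functor `p : E ⥤ B` is a Grothendieck opfibration if every morphism of `B`
out of `p.obj e` admits a cocartesian lift with source `e`. -/
def IsGrothendieckOpfibration {E B : Type u} [SmallCategory E] [SmallCategory B]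
    (p : E ⥤ B) : Prop :=
  ∀ {a : E} {S : B} (f : p.obj a ⟶ S), ∃ (b : E) (φ : a ⟶ b), p.IsStronglyCocartesian f φ

variable {E B : Type u} [SmallCategory E] [SmallCategory B]

/-- The natural inclusion of the fiber `E_b` of `p : E ⥤ B` over `b` into the comma
category `p/b`, sending `e` to `(e, 𝟙 b)`. -/
@[simps]
def fiberToCostructuredArrow (p : E ⥤ B) (b : B) : Fiber p b ⥤ CostructuredArrow p b where
  obj e := CostructuredArrow.mk (eqToHom e.2)
  map {e e'} φ := CostructuredArrow.homMk φ.1 (by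
    have := φ.2
    rw [IsHomLift.fac' p (𝟙 b) φ.1]
    simp)

/-! A strongly cocartesian lift `φ : e ⟶ e'` of `u : p e ⟶ b` is initial among arrows from
`(e, u)` into the image of the fiber inclusion `E_b ⥤ p/b`: a morphism `(e, u) ⟶ (e'', 𝟙 b)` is
a map `e ⟶ e''` over `u`, and it factors uniquely through `φ` by a vertical map. So, when `p` is an
opfibration, the fiber inclusion has a left adjoint, hence is final, and the colimit over `p/b`
computing `(Lan_p F)(b)` is the colimit over `E_b`. -/

namespace fiberToCostructuredArrow

variable (p : E ⥤ B) {b : B} {d : CostructuredArrow p b}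

instance isHomLift_hom_left (y : StructuredArrow d (fiberToCostructuredArrow p b)) :
    IsHomLift p d.hom y.hom.left := by
  have hw : p.map y.hom.left ≫ eqToHom y.right.2 = d.hom := CostructuredArrow.w y.hom
  rw [← hw]
  exact IsHomLift.lift_comp_eqToHom p (p.map y.hom.left) y.hom.left y.right.2

noncomputable def structuredArrowOfLift {e : E} (φ : d.left ⟶ e) [IsHomLift p d.hom φ] :
    StructuredArrow d (fiberToCostructuredArrow p b) :=
  have he : p.obj e = b := IsHomLift.codomain_eq p d.hom φ
  have hw : p.map φ ≫ eqToHom he = d.hom := by simp [IsHomLift.fac' p d.hom φ]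
  StructuredArrow.mk (Y := Fiber.mk he) (CostructuredArrow.homMk φ hw)

noncomputable def isInitialStructuredArrowOfLift {e : E} (φ : d.left ⟶ e)
    [p.IsStronglyCocartesian d.hom φ] : IsInitial (structuredArrowOfLift p φ) :=
  have hφ : d.hom = d.hom ≫ 𝟙 b := (Category.comp_id d.hom).symm
  IsInitial.ofUniqueHom
    (fun y => StructuredArrow.homMk
      (Fiber.homMk p b (IsStronglyCocartesian.map p d.hom φ hφ y.hom.left))
      (CostructuredArrow.hom_ext _ _ (IsStronglyCocartesian.fac p d.hom φ hφ _)))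
    (fun y m => StructuredArrow.ext _ _ <| Fiber.hom_ext <|
      (IsStronglyCocartesian.universal_property p d.hom φ (𝟙 b) d.hom hφ y.hom.left).unique
        ⟨m.right.2, congrArg CommaMorphism.left (StructuredArrow.w m)⟩
        ⟨IsStronglyCocartesian.map_isHomLift p d.hom φ hφ _,
          IsStronglyCocartesian.fac p d.hom φ hφ _⟩)

end fiberToCostructuredArrow

open fiberToCostructuredArrow in
lemma fiberToCostructuredArrow_isRightAdjoint (p : E ⥤ B) (hp : IsGrothendieckOpfibration p)
    (b : B) : (fiberToCostructuredArrow p b).IsRightAdjoint := by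
  have (d : CostructuredArrow p b) :
      HasInitial (StructuredArrow d (fiberToCostructuredArrow p b)) := by
    obtain ⟨_, φ, _⟩ := hp d.hom
    exact (isInitialStructuredArrowOfLift p φ).hasInitial
  exact isRightAdjointOfStructuredArrowInitials _

/-- If `p : E ⥤ B` is a Grothendieck opfibration and `C` is cocomplete, then the
pointwise left Kan extension of `F : E ⥤ C` along `p`, evaluated at `b : B`, is
naturally isomorphic to the colimit of the restriction of `F` to the fiber `E_b`. -/
theorem pointwiseLeftKanExtension_obj_iso_colimit_fiber
    {C : Type u₂} [Category.{v₂} C] [HasColimitsOfSize.{u, u} C]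
    (p : E ⥤ B) (hp : IsGrothendieckOpfibration p) (F : E ⥤ C) (b : B) :
    Nonempty ((p.pointwiseLeftKanExtension F).obj b ≅
      colimit (Fiber.fiberInclusion ⋙ F : Fiber p b ⥤ C)) := by
  have := fiberToCostructuredArrow_isRightAdjoint p hp b
  exact ⟨(Final.colimitIso (fiberToCostructuredArrow p b)
    (CostructuredArrow.proj p b ⋙ F)).symm⟩
end

section
/- Let p : E ⥤ B be a Grothendieck fibration, C a complete category, and F : E ⥤ C a functor. Then for every object b of B, the pointwise right Kan extension of F along p evaluated at b is naturally isomorphic to the limit of the restriction of F to the fiber E_b. -/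
/-! A cartesian lift of `X.hom : b ⟶ p X.right` is a terminal object of the comma category
`fiberToStructuredArrow p b ↓ X`. Hence the inclusion of the fiber `E_b` into `b/p` is initial,
and restricting the diagram `b/p ⥤ E ⥤ C` defining the Kan extension to `E_b` does not change its
limit. -/

open CategoryTheory CategoryTheory.Functor CategoryTheory.Limits

universe v₂ u u₂

variable {E B : Type u} [SmallCategory E] [SmallCategory B]

/-- The natural inclusion of the fiber `E_b` of `p : E ⥤ B` over `b` into the comma
category `b/p` of pairs `(e, u : b ⟶ p e)`, sending `e` to `(e, 𝟙 b)`. -/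
@[simps]
def fiberToStructuredArrow (p : E ⥤ B) (b : B) : Fiber p b ⥤ StructuredArrow b p where
  obj e := StructuredArrow.mk (eqToHom e.2.symm)
  map {e e'} φ := StructuredArrow.homMk φ.1 (by
    have := φ.2
    rw [IsHomLift.fac' p (𝟙 b) φ.1]
    simp)

namespace fiberToStructuredArrow

open Functor.IsPreFibered

variable (p : E ⥤ B) (b : B)

lemma isHomLift_hom_right {e : Fiber p b} {X : StructuredArrow b p}
    (f : (fiberToStructuredArrow p b).obj e ⟶ X) : p.IsHomLift X.hom f.right :=
  IsHomLift.of_fac p X.hom f.right e.2 rfl (by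
    rw [← StructuredArrow.w f, eqToHom_refl, Category.comp_id]
    rfl)

def homMk {e : Fiber p b} {X : StructuredArrow b p} (φ : e.1 ⟶ X.right)
    [p.IsHomLift X.hom φ] : (fiberToStructuredArrow p b).obj e ⟶ X :=
  StructuredArrow.homMk φ (by
    obtain ⟨e, rfl⟩ := e
    exact (Category.id_comp _).trans (IsHomLift.eq_of_isHomLift p X.hom φ).symm)

variable [p.IsPreFibered]

noncomputable def cartesianLift (X : StructuredArrow b p) :
    CostructuredArrow (fiberToStructuredArrow p b) X :=
  CostructuredArrow.mk (Y := ⟨_, pullbackObj_proj rfl X.hom⟩)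
    (homMk p b (pullbackMap rfl X.hom))

variable {p b}

noncomputable def toCartesianLift {e : Fiber p b} {X : StructuredArrow b p}
    (f : (fiberToStructuredArrow p b).obj e ⟶ X) : e ⟶ (cartesianLift p b X).left :=
  have := isHomLift_hom_right p b f
  ⟨_, IsCartesian.map_isHomLift p X.hom (pullbackMap rfl X.hom) f.right⟩

lemma toCartesianLift_fac {e : Fiber p b} {X : StructuredArrow b p}
    (f : (fiberToStructuredArrow p b).obj e ⟶ X) :
    (fiberToStructuredArrow p b).map (toCartesianLift f) ≫ (cartesianLift p b X).hom = f :=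
  have := isHomLift_hom_right p b f
  StructuredArrow.hom_ext _ _ (IsCartesian.fac p X.hom (pullbackMap rfl X.hom) f.right)

lemma toCartesianLift_unique {e : Fiber p b} {X : StructuredArrow b p}
    (f : (fiberToStructuredArrow p b).obj e ⟶ X) (g : e ⟶ (cartesianLift p b X).left)
    (hg : (fiberToStructuredArrow p b).map g ≫ (cartesianLift p b X).hom = f) :
    g = toCartesianLift f := by
  have := isHomLift_hom_right p b f
  ext
  exact (IsCartesian.universal_property (p := p) (f := X.hom) (φ := pullbackMap rfl X.hom)
    f.right).unique ⟨g.2, congrArg CommaMorphism.right hg⟩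
    ⟨IsCartesian.map_isHomLift p X.hom (pullbackMap rfl X.hom) f.right,
      IsCartesian.fac p X.hom (pullbackMap rfl X.hom) f.right⟩

variable (p b)

noncomputable def isTerminalCartesianLift (X : StructuredArrow b p) :
    IsTerminal (cartesianLift p b X) :=
  IsTerminal.ofUniqueHom
    (fun Y => CostructuredArrow.homMk (toCartesianLift Y.hom) (toCartesianLift_fac Y.hom))
    (fun Y m => CostructuredArrow.hom_ext _ _
      (toCartesianLift_unique Y.hom m.left (CostructuredArrow.w m)))

instance initial : (fiberToStructuredArrow p b).Initial where
  out X := isConnected_of_isTerminal _ (isTerminalCartesianLift p b X)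

end fiberToStructuredArrow

/-- If `p : E ⥤ B` is a Grothendieck fibration and `C` is complete, then the
pointwise right Kan extension of `F : E ⥤ C` along `p`, evaluated at `b : B`, is
naturally isomorphic to the limit of the restriction of `F` to the fiber `E_b`. -/
theorem pointwiseRightKanExtension_obj_iso_limit_fiber
    {C : Type u₂} [Category.{v₂} C] [HasLimitsOfSize.{u, u} C]
    (p : E ⥤ B) [p.IsFibered] (F : E ⥤ C) (b : B) :
    Nonempty ((p.pointwiseRightKanExtension F).obj b ≅
      limit (Fiber.fiberInclusion ⋙ F : Fiber p b ⥤ C)) :=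
  ⟨(Functor.Initial.limitIso (fiberToStructuredArrow p b) (StructuredArrow.proj b p ⋙ F)).symm⟩
end

section
/- Let p : D ⥤ S be a Grothendieck fibration and I any category. Then the induced postcomposition functor (p ∘ -) : Fun(I, D) ⥤ Fun(I, S) between functor categories is again a Grothendieck fibration; cartesian lifts are constructed objectwise using a cleavage of p. -/
open CategoryTheory

universe v₁ v₂ v₃ u₁ u₂ u₃

/-!
Pull back objectwise: choose cartesian lifts `φᵢ : Lᵢ ⟶ F i` of the components `fᵢ` of
`f : G ⟶ F ⋙ p`. The universal property of `φⱼ` turns `φᵢ ≫ F u` into a map `Lᵢ ⟶ Lⱼ` over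
`G u`, making `i ↦ Lᵢ` a functor over `G` and `φ` a natural transformation.
Since a natural transformation lies over another exactly when its components do, the universal
property of `φ` for `(I ⥤ D) ⥤ (I ⥤ S)` is the objectwise one, and the induced components are
natural by the uniqueness part of the universal property.
-/

namespace CategoryTheory.Functor

variable {D : Type u₁} {S : Type u₂} {I : Type u₃}
  [Category.{v₁} D] [Category.{v₂} S] [Category.{v₃} I] {p : D ⥤ S}

lemma isHomLift_iff_eq_map {a b : D} (f : p.obj a ⟶ p.obj b) (φ : a ⟶ b) :
    p.IsHomLift f φ ↔ f = p.map φ :=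
  ⟨fun _ => IsHomLift.eq_of_isHomLift p f φ, fun h => h ▸ inferInstance⟩

lemma isHomLift_whiskeringRight_obj_iff {F F' : I ⥤ D} {G G' : I ⥤ S}
    (hF : F ⋙ p = G) (hF' : F' ⋙ p = G') (η : G ⟶ G') (Θ : F ⟶ F') :
    ((whiskeringRight I D S).obj p).IsHomLift η Θ ↔ ∀ i, p.IsHomLift (η.app i) (Θ.app i) := by
  subst hF hF'
  simp only [isHomLift_iff_eq_map]
  exact NatTrans.ext_iff.trans funext_iff

section ObjectwiseLift

variable {F : I ⥤ D} {G : I ⥤ S} (f : G ⟶ F ⋙ p) {L : I → D} (φ : ∀ i, L i ⟶ F.obj i)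
  [∀ i, p.IsStronglyCartesian (f.app i) (φ i)]

instance isHomLift_map_comp_app {i j : I} (u : i ⟶ j) :
    p.IsHomLift (G.map u ≫ f.app j) (φ i ≫ F.map u) := by
  rw [f.naturality]
  exact inferInstanceAs (p.IsHomLift (f.app i ≫ p.map (F.map u)) _)

noncomputable def objectwiseLift : I ⥤ D where
  obj := L
  map {i j} u := IsStronglyCartesian.map p (f.app j) (φ j) (g := G.map u) rfl (φ i ≫ F.map u)
  map_id i := by
    have : p.IsHomLift (G.map (𝟙 i)) (𝟙 (L i)) := by
      rw [G.map_id]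
      exact IsHomLift.id (IsHomLift.domain_eq p (f.app i) (φ i))
    symm
    apply IsStronglyCartesian.map_uniq
    simp
  map_comp {i j k} u v := by
    symm
    have : p.IsHomLift (G.map (u ≫ v))
        (IsStronglyCartesian.map p (f.app j) (φ j) (g := G.map u) rfl (φ i ≫ F.map u) ≫
          IsStronglyCartesian.map p (f.app k) (φ k) (g := G.map v) rfl (φ j ≫ F.map v)) := by
      rw [G.map_comp]
      infer_instance
    apply IsStronglyCartesian.map_uniq
    simp

noncomputable def objectwiseLiftπ : objectwiseLift f φ ⟶ F where
  app := φ
  naturality i j u :=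
    IsStronglyCartesian.fac p (f.app j) (φ j) (g := G.map u) rfl (φ i ≫ F.map u)

instance isHomLift_objectwiseLift_map {i j : I} (u : i ⟶ j) :
    p.IsHomLift (G.map u) ((objectwiseLift f φ).map u) :=
  IsStronglyCartesian.map_isHomLift p (f.app j) (φ j) (g := G.map u) rfl (φ i ≫ F.map u)

lemma objectwiseLift_comp : objectwiseLift f φ ⋙ p = G :=
  Functor.ext (fun i => (IsHomLift.domain_eq p (f.app i) (φ i) :))
    (fun _ _ u => IsHomLift.fac' p (G.map u) ((objectwiseLift f φ).map u))

instance isStronglyCartesian_objectwiseLiftπ_app (i : I) :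
    p.IsStronglyCartesian (f.app i) ((objectwiseLiftπ f φ).app i) :=
  inferInstanceAs (p.IsStronglyCartesian (f.app i) (φ i))

end ObjectwiseLift

section ObjectwiseMap

variable {F H H' : I ⥤ D} (f : H ⋙ p ⟶ F ⋙ p) (φ : H ⟶ F)
  [∀ i, p.IsStronglyCartesian (f.app i) (φ.app i)]
  (g : H' ⋙ p ⟶ H ⋙ p) (φ' : H' ⟶ F)

noncomputable def objectwiseMap [∀ i, p.IsHomLift (g.app i ≫ f.app i) (φ'.app i)] :
    H' ⟶ H where
  app i := IsStronglyCartesian.map p (f.app i) (φ.app i) (g := g.app i) rfl (φ'.app i)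
  naturality i j u := by
    have : p.IsHomLift (g.app i ≫ (H ⋙ p).map u) (H'.map u ≫
        IsStronglyCartesian.map p (f.app j) (φ.app j) (g := g.app j) rfl (φ'.app j)) := by
      rw [← g.naturality]
      exact inferInstanceAs (p.IsHomLift (p.map (H'.map u) ≫ g.app j) _)
    have : p.IsHomLift (g.app i ≫ (H ⋙ p).map u)
        (IsStronglyCartesian.map p (f.app i) (φ.app i) (g := g.app i) rfl (φ'.app i) ≫ H.map u) :=
      inferInstanceAs (p.IsHomLift (g.app i ≫ p.map (H.map u)) _)
    apply IsStronglyCartesian.ext p (f.app j) (φ.app j) (g.app i ≫ (H ⋙ p).map u)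
    simp

lemma objectwiseMap_comp [∀ i, p.IsHomLift (g.app i ≫ f.app i) (φ'.app i)] :
    objectwiseMap f φ g φ' ≫ φ = φ' := by
  ext i
  exact IsStronglyCartesian.fac p (f.app i) (φ.app i) (g := g.app i) rfl (φ'.app i)

lemma isHomLift_app_objectwiseMap [∀ i, p.IsHomLift (g.app i ≫ f.app i) (φ'.app i)] (i : I) :
    p.IsHomLift (g.app i) ((objectwiseMap f φ g φ').app i) :=
  IsStronglyCartesian.map_isHomLift p (f.app i) (φ.app i) (g := g.app i) rfl (φ'.app i)

end ObjectwiseMap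

lemma isStronglyCartesian_whiskeringRight_obj_of_app {F H : I ⥤ D} {G : I ⥤ S}
    (f : G ⟶ F ⋙ p) (φ : H ⟶ F) (hH : H ⋙ p = G)
    [∀ i, p.IsStronglyCartesian (f.app i) (φ.app i)] :
    ((whiskeringRight I D S).obj p).IsStronglyCartesian f φ := by
  subst hH
  have : ((whiskeringRight I D S).obj p).IsHomLift f φ :=
    (isHomLift_whiskeringRight_obj_iff rfl rfl f φ).2 fun _ => inferInstance
  refine ⟨fun {H'} g φ' hφ' => ?_⟩
  have : ∀ i, p.IsHomLift (g.app i ≫ f.app i) (φ'.app i) :=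
    (isHomLift_whiskeringRight_obj_iff rfl rfl (g ≫ f) φ').1 hφ'
  refine ⟨objectwiseMap f φ g φ', ⟨?_, objectwiseMap_comp f φ g φ'⟩, ?_⟩
  · exact (isHomLift_whiskeringRight_obj_iff rfl rfl g _).2
      (isHomLift_app_objectwiseMap f φ g φ')
  · rintro τ ⟨hτ, rfl⟩
    ext i
    have := (isHomLift_whiskeringRight_obj_iff rfl rfl g τ).1 hτ i
    exact IsStronglyCartesian.map_uniq p (f.app i) (φ.app i) rfl _ (τ.app i) rfl

end CategoryTheory.Functor

/-- If `p : D ⥤ S` is a Grothendieck fibration, then for any category `I` the induced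
postcomposition functor `(I ⥤ D) ⥤ (I ⥤ S)` between functor categories is again a
Grothendieck fibration. -/
theorem whiskeringRight_isFibered {D : Type u₁} {S : Type u₂} {I : Type u₃}
    [Category.{v₁} D] [Category.{v₂} S] [Category.{v₃} I]
    (p : D ⥤ S) [p.IsFibered] :
    ((Functor.whiskeringRight I D S).obj p).IsFibered := by
  refine Functor.IsFibered.of_exists_isStronglyCartesian fun F G f => ?_
  let φ i := Functor.IsPreFibered.pullbackMap (p := p) rfl (f.app i)
  exact ⟨_, Functor.objectwiseLiftπ f φ,
    Functor.isStronglyCartesian_whiskeringRight_obj_of_app f _ (Functor.objectwiseLift_comp f φ)⟩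
end
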